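/- For every ν : ℕ → ℤ, the infinite product f_ν(z) = ∏_{k=1}^∞ E_{m_k}(z/k)^{ν(k)}, with m_k = k + ⌈max(0, log|ν(k)|)⌉, converges locally uniformly on ℂ \ {k ∈ ℕ : ν(k) ≠ 0} to a holomorphic nowhere-vanishing function on ℂ \ {k : k ≥ 1}. -/

import Mathlib

open Filter

/-- The Weierstrass factor `E_m(z) = (1 - z) * exp(∑_{j=1}^m z^j / j)`. -/
noncomputable def weierstrassFactor (m : ℕ) (z : ℂ) : ℂ :=
  (1 - z) * Complex.exp (∑ j ∈ Finset.Icc 1 m, z ^ j / j)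

/-- `m_k^ν = k + ⌈max(0, log |ν(k)|)⌉`. -/
noncomputable def mExp (ν : ℕ → ℤ) (k : ℕ) : ℕ :=
  k + ⌈max 0 (Real.log |(ν k : ℝ)|)⌉₊

/-! For `‖w‖ ≤ 1/2` we have `E_m(w) = exp L` where `L` is the remainder of the Taylor series of
`log (1 - w)` after degree `m`, so `‖L‖ ≤ 2‖w‖^(m+1)`. The exponent `m_k` is chosen so that
`|ν(k)| ≤ 3^(m_k - k)`; hence for `3‖z‖ ≤ k` the factor `E_{m_k}(z/k)^{ν(k)}` differs from `1` by at
most `4·3^(-k)`. These bounds are summable, so the product converges uniformly on every compact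
subset of the open set avoiding the poles and zeros of the factors; the limit is holomorphic as a
locally uniform limit of holomorphic functions, and it does not vanish where no factor does,
because `∑ ‖E_{m_k}(z/k)^{ν(k)} - 1‖ < ∞`. -/

open Complex Finset

lemma weierstrassFactor_ne_zero {m : ℕ} {w : ℂ} (hw : w ≠ 1) : weierstrassFactor m w ≠ 0 :=
  mul_ne_zero (sub_ne_zero.2 hw.symm) (exp_ne_zero _)

lemma differentiable_weierstrassFactor (m : ℕ) : Differentiable ℂ (weierstrassFactor m) := by
  unfold weierstrassFactor
  fun_prop

lemma logTaylor_succ_neg (m : ℕ) (w : ℂ) :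
    logTaylor (m + 1) (-w) = -∑ j ∈ Icc 1 m, w ^ j / j := by
  rw [logTaylor, Nat.range_succ_eq_Icc_zero, Icc_eq_cons_Ioc m.zero_le, sum_cons,
    ← Icc_add_one_left_eq_Ioc, zero_add, ← sum_neg_distrib]
  simp only [Nat.cast_zero, div_zero, zero_add]
  refine sum_congr rfl fun j _ => ?_
  rw [neg_pow w, ← mul_assoc, ← pow_add, add_right_comm, ← two_mul, pow_succ, pow_mul]
  simp [neg_div]

lemma weierstrassFactor_eq_exp {m : ℕ} {w : ℂ} (hw : w ≠ 1) :
    weierstrassFactor m w = exp (log (1 + -w) - logTaylor (m + 1) (-w)) := by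
  rw [logTaylor_succ_neg, sub_neg_eq_add, exp_add, ← sub_eq_add_neg,
    exp_log (sub_ne_zero.2 hw.symm), weierstrassFactor]

lemma norm_log_sub_logTaylor_le_two_mul {m : ℕ} {w : ℂ} (hw : ‖w‖ ≤ 1 / 2) :
    ‖log (1 + -w) - logTaylor (m + 1) (-w)‖ ≤ 2 * ‖w‖ ^ (m + 1) := by
  have hw1 : ‖-w‖ < 1 := by rw [norm_neg]; linarith
  refine (norm_log_sub_logTaylor_le m hw1).trans ?_
  rw [norm_neg, div_le_iff₀ (by positivity)]
  have hinv : (1 - ‖w‖)⁻¹ ≤ 2 := by rw [inv_le_comm₀ (by linarith) two_pos]; linarith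
  have hm : (1 : ℝ) ≤ m + 1 := by linarith [m.cast_nonneg (α := ℝ)]
  calc ‖w‖ ^ (m + 1) * (1 - ‖w‖)⁻¹ ≤ ‖w‖ ^ (m + 1) * 2 := by gcongr
    _ ≤ 2 * ‖w‖ ^ (m + 1) * (m + 1) := by nlinarith [pow_nonneg (norm_nonneg w) (m + 1)]

lemma norm_weierstrassFactor_zpow_sub_one_le {m : ℕ} {n : ℤ} {w : ℂ} (hw : ‖w‖ ≤ 1 / 2)
    (hn : 2 * |(n : ℝ)| * ‖w‖ ^ (m + 1) ≤ 1) :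
    ‖weierstrassFactor m w ^ n - 1‖ ≤ 4 * |(n : ℝ)| * ‖w‖ ^ (m + 1) := by
  have hw1 : w ≠ 1 := by rintro rfl; norm_num at hw
  set L := log (1 + -w) - logTaylor (m + 1) (-w)
  have hnL : ‖(n : ℂ) * L‖ ≤ 2 * |(n : ℝ)| * ‖w‖ ^ (m + 1) := by
    rw [norm_mul, norm_intCast, mul_comm 2, mul_assoc]
    exact mul_le_mul_of_nonneg_left (norm_log_sub_logTaylor_le_two_mul hw) (abs_nonneg _)
  rw [weierstrassFactor_eq_exp hw1, ← exp_int_mul]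
  calc ‖exp (n * L) - 1‖ ≤ 2 * ‖(n : ℂ) * L‖ := norm_exp_sub_one_le (hnL.trans hn)
    _ ≤ 4 * |(n : ℝ)| * ‖w‖ ^ (m + 1) := by linarith

lemma abs_le_three_pow_ceil_log (x : ℝ) : |x| ≤ 3 ^ ⌈max 0 (Real.log |x|)⌉₊ := by
  rcases eq_or_ne x 0 with rfl | hx
  · simp
  set c := ⌈max 0 (Real.log |x|)⌉₊
  calc |x| = Real.exp (Real.log |x|) := (Real.exp_log (abs_pos.2 hx)).symm
    _ ≤ Real.exp c := Real.exp_le_exp.2 ((le_max_right _ _).trans (Nat.le_ceil _))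
    _ = Real.exp 1 ^ c := by rw [← Real.exp_nat_mul, mul_one]
    _ ≤ 3 ^ c := by gcongr; exact (Real.exp_one_lt_d9.trans (by norm_num)).le

lemma abs_mul_pow_mExp_succ_le (ν : ℕ → ℤ) (k : ℕ) {t : ℝ} (ht0 : 0 ≤ t) (ht : t ≤ 1 / 3) :
    |(ν k : ℝ)| * t ^ (mExp ν k + 1) ≤ (1 / 3) ^ (k + 1) := by
  set c := ⌈max 0 (Real.log |(ν k : ℝ)|)⌉₊
  have hm : mExp ν k + 1 = c + (k + 1) := by rw [mExp]; ring
  calc |(ν k : ℝ)| * t ^ (mExp ν k + 1) ≤ |(ν k : ℝ)| * (1 / 3) ^ (c + (k + 1)) := by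
        rw [hm]; gcongr
    _ = |(ν k : ℝ)| / 3 ^ c * (1 / 3) ^ (k + 1) := by rw [pow_add, one_div_pow]; ring
    _ ≤ 1 * (1 / 3) ^ (k + 1) := by
        gcongr
        exact div_le_one_of_le₀ (abs_le_three_pow_ceil_log _) (by positivity)
    _ = (1 / 3) ^ (k + 1) := one_mul _

noncomputable def weierstrassTerm (ν : ℕ → ℤ) (k : ℕ) (z : ℂ) : ℂ :=
  weierstrassFactor (mExp ν k) (z / k) ^ ν k

lemma norm_weierstrassTerm_sub_one_le (ν : ℕ → ℤ) {k : ℕ} {z : ℂ} (hz : 3 * ‖z‖ ≤ k) :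
    ‖weierstrassTerm ν k z - 1‖ ≤ 4 * (1 / 3) ^ k := by
  have hw : ‖z / k‖ ≤ 1 / 3 := by
    rw [norm_div, norm_natCast]
    exact div_le_of_le_mul₀ k.cast_nonneg (by norm_num) (by linarith)
  have hsmall := abs_mul_pow_mExp_succ_le ν k (norm_nonneg _) hw
  have h3 : ((1 : ℝ) / 3) ^ (k + 1) ≤ (1 / 3) ^ k :=
    pow_le_pow_of_le_one (by norm_num) (by norm_num) k.le_succ
  have h1 : ((1 : ℝ) / 3) ^ (k + 1) ≤ 1 / 3 :=
    pow_le_of_le_one (by norm_num) (by norm_num) k.succ_ne_zero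
  refine (norm_weierstrassFactor_zpow_sub_one_le (hw.trans (by norm_num)) ?_).trans ?_ <;>
    linarith

lemma weierstrassFactor_div_succ_ne_zero (m : ℕ) {k : ℕ} {z : ℂ} (hz : z ≠ (k + 1 : ℕ)) :
    weierstrassFactor m (z / (k + 1 : ℕ)) ≠ 0 :=
  weierstrassFactor_ne_zero <| (div_eq_one_iff_eq (Nat.cast_ne_zero.2 k.succ_ne_zero)).not.2 hz

lemma isOpen_setOf_ne_natCast (ν : ℕ → ℤ) :
    IsOpen {z : ℂ | ∀ k : ℕ, 1 ≤ k → ν k ≠ 0 → z ≠ (k : ℂ)} := by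
  have hcast := Complex.isometry_ofReal.isClosedEmbedding.comp Nat.isClosedEmbedding_coe_real
  convert (hcast.isClosedMap {k | 1 ≤ k ∧ ν k ≠ 0} (isClosed_discrete _)).isOpen_compl
  ext z
  simp [eq_comm]

lemma differentiableOn_weierstrassTerm_succ (ν : ℕ → ℤ) (k : ℕ) :
    DifferentiableOn ℂ (weierstrassTerm ν (k + 1))
      {z : ℂ | ∀ k : ℕ, 1 ≤ k → ν k ≠ 0 → z ≠ (k : ℂ)} := by
  refine ((differentiable_weierstrassFactor _).comp_differentiableOn
    (differentiableOn_id.div_const _)).zpow ?_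
  rcases eq_or_ne (ν (k + 1)) 0 with hν | hν
  · exact .inr hν.ge
  · exact .inl fun z hz => weierstrassFactor_div_succ_ne_zero _ (hz _ k.succ_pos hν)

lemma eventually_norm_weierstrassTerm_succ_sub_one_le (ν : ℕ → ℤ) (r : ℝ) :
    ∀ᶠ k in atTop, ∀ z ∈ Metric.closedBall (0 : ℂ) r,
      ‖weierstrassTerm ν (k + 1) z - 1‖ ≤ 4 * (1 / 3) ^ (k + 1) := by
  filter_upwards [eventually_ge_atTop ⌈3 * r⌉₊] with k hk z hz
  have hkr : 3 * r ≤ k := Nat.ceil_le.1 hk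
  have hzr := mem_closedBall_zero_iff.1 hz
  exact norm_weierstrassTerm_sub_one_le ν (by push_cast; linarith)

lemma summable_four_mul_one_third_pow_succ : Summable fun k : ℕ => 4 * (1 / 3 : ℝ) ^ (k + 1) :=
  ((summable_nat_add_iff 1).2 (summable_geometric_of_lt_one (by norm_num) (by norm_num))).mul_left 4

lemma hasProdLocallyUniformlyOn_weierstrassTerm_succ (ν : ℕ → ℤ) :
    HasProdLocallyUniformlyOn (fun k => weierstrassTerm ν (k + 1))
      (fun z => ∏' k, weierstrassTerm ν (k + 1) z)
      {z : ℂ | ∀ k : ℕ, 1 ≤ k → ν k ≠ 0 → z ≠ (k : ℂ)} := by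
  refine hasProdLocallyUniformlyOn_of_forall_compact (isOpen_setOf_ne_natCast ν)
    fun S hSK hS => ?_
  obtain ⟨r, hr⟩ := hS.isBounded.subset_closedBall 0
  have hbound : ∀ᶠ k in atTop, ∀ z ∈ S,
      ‖weierstrassTerm ν (k + 1) z - 1‖ ≤ 4 * (1 / 3) ^ (k + 1) := by
    filter_upwards [eventually_norm_weierstrassTerm_succ_sub_one_le ν r] with k hk z hz
    exact hk z (hr hz)
  simpa using Summable.hasProdUniformlyOn_nat_one_add hS summable_four_mul_one_third_pow_succ
    hbound fun k => ((differentiableOn_weierstrassTerm_succ ν k).continuousOn.mono hSK).sub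
      continuousOn_const

lemma tprod_weierstrassTerm_succ_ne_zero (ν : ℕ → ℤ) {z : ℂ} (hz : ∀ k : ℕ, 1 ≤ k → z ≠ k) :
    ∏' k, weierstrassTerm ν (k + 1) z ≠ 0 := by
  have hsum : Summable fun k => ‖weierstrassTerm ν (k + 1) z - 1‖ := by
    refine .of_norm_bounded_eventually_nat summable_four_mul_one_third_pow_succ ?_
    filter_upwards [eventually_norm_weierstrassTerm_succ_sub_one_le ν ‖z‖] with k hk
    simpa using hk z (by simp)
  have hne k : weierstrassTerm ν (k + 1) z ≠ 0 :=
    zpow_ne_zero _ (weierstrassFactor_div_succ_ne_zero _ (hz (k + 1) k.succ_pos))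
  simpa using tprod_one_add_ne_zero_of_summable (by simpa using hne) hsum

lemma prod_range_weierstrassTerm_succ (ν : ℕ → ℤ) (n : ℕ) (z : ℂ) :
    ∏ k ∈ range n, weierstrassTerm ν (k + 1) z = ∏ k ∈ Icc 1 n, weierstrassTerm ν k z := by
  rw [range_eq_Ico, prod_Ico_add' (fun k => weierstrassTerm ν k z), zero_add,
    Ico_add_one_right_eq_Icc]

/-- The product `f_ν(z) = ∏_{k=1}^∞ E_{m_k}(z/k)^{ν(k)}` converges locally uniformly
on the complement of `{k ≥ 1 : ν(k) ≠ 0}` to a function holomorphic and nowhere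
vanishing on `ℂ ∖ {1, 2, 3, …}`. -/
theorem weierstrass_product_converges (ν : ℕ → ℤ) :
    ∃ f : ℂ → ℂ,
      TendstoLocallyUniformlyOn
        (fun n z => ∏ k ∈ Finset.Icc 1 n, weierstrassFactor (mExp ν k) (z / k) ^ (ν k))
        f atTop {z : ℂ | ∀ k : ℕ, 1 ≤ k → ν k ≠ 0 → z ≠ (k : ℂ)} ∧
      DifferentiableOn ℂ f {z : ℂ | ∀ k : ℕ, 1 ≤ k → z ≠ (k : ℂ)} ∧
      ∀ z ∈ {z : ℂ | ∀ k : ℕ, 1 ≤ k → z ≠ (k : ℂ)}, f z ≠ 0 := by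
  have hconv :=
    (hasProdLocallyUniformlyOn_weierstrassTerm_succ ν).tendstoLocallyUniformlyOn_finsetRange
  have hdiff n : DifferentiableOn ℂ (fun z => ∏ k ∈ range n, weierstrassTerm ν (k + 1) z)
      {z : ℂ | ∀ k : ℕ, 1 ≤ k → ν k ≠ 0 → z ≠ (k : ℂ)} :=
    .fun_finsetProd fun k _ => differentiableOn_weierstrassTerm_succ ν k
  simp only [prod_range_weierstrassTerm_succ] at hconv hdiff
  refine ⟨_, hconv, ?_, fun z hz => tprod_weierstrassTerm_succ_ne_zero ν hz⟩
  exact (hconv.differentiableOn (.of_forall hdiff) (isOpen_setOf_ne_natCast ν)).mono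
    fun z hz k hk _ => hz k hk
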